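/- Let n ≥ 3, m, a ∈ ℝ with a = m/2. Define A(r) = (1/2) r^{n−2}(1 + 2a/r^{n−2}) + O(r^{−1}), H²(r) = (n−1)²/r² − 4a(n−1)³/((n−2)rⁿ) + O(r^{−n−1}), and ρ(r) = (n−1)(n−2)/r² − 4a(n−1)/rⁿ + O(r^{−n−1}). Then F(r) := A(r)·(1 − ((n−2)/(n−1))·H²(r)/ρ(r)) satisfies F(r) = 2a + O(r^{−1}); in particular lim_{r→∞} F(r) = 2a. -/

import Mathlib

open MeasureTheory Filter Topology Real

set_option maxHeartbeats 1600000 in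
/-- With `a = m/2`, if
`A(r) = (1/2)r^{n-2}(1 + 2a/r^{n-2}) + O(r^{-1})`,
`h(r) = (n-1)²/r² - 4a(n-1)³/((n-2)rⁿ) + O(r^{-n-1})` (playing the role of H²),
`p(r) = (n-1)(n-2)/r² - 4a(n-1)/rⁿ + O(r^{-n-1})` (playing the role of ρ), then
`F(r) := A(r)(1 - ((n-2)/(n-1)) h(r)/p(r)) = 2a + O(r^{-1})`; in particular
`F(r) → 2a` as `r → ∞`. -/
theorem mccormick_miao_functional_recovers_mass
    (n : ℕ) (hn : 3 ≤ n) (m a C r₀ : ℝ) (ha : a = m / 2) (hr₀ : 0 < r₀)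
    (A h p : ℝ → ℝ)
    (hA : ∀ r ≥ r₀, |A r - (1 / 2) * r ^ ((n : ℝ) - 2) - a| ≤ C / r)
    (hh : ∀ r ≥ r₀, |h r - (((n : ℝ) - 1) ^ 2 / r ^ 2 -
        4 * a * ((n : ℝ) - 1) ^ 3 / (((n : ℝ) - 2) * r ^ (n : ℝ)))|
        ≤ C / r ^ ((n : ℝ) + 1))
    (hp : ∀ r ≥ r₀, |p r - (((n : ℝ) - 1) * ((n : ℝ) - 2) / r ^ 2 -
        4 * a * ((n : ℝ) - 1) / r ^ (n : ℝ))|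
        ≤ C / r ^ ((n : ℝ) + 1)) :
    (∃ C' r₁ : ℝ, 0 < r₁ ∧ ∀ r ≥ r₁,
      |A r * (1 - (((n : ℝ) - 2) / ((n : ℝ) - 1)) * h r / p r) - 2 * a| ≤ C' / r) ∧
    Tendsto (fun r => A r * (1 - (((n : ℝ) - 2) / ((n : ℝ) - 1)) * h r / p r))
      atTop (𝓝 (2 * a)) := by
  have h3 : (3:ℝ) ≤ (n:ℝ) := by exact_mod_cast hn
  set b : ℝ := (n:ℝ) - 1 with hbdef
  set c : ℝ := (n:ℝ) - 2 with hcdef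
  have hb2 : (2:ℝ) ≤ b := by rw [hbdef]; linarith
  have hc1 : (1:ℝ) ≤ c := by rw [hcdef]; linarith
  have hb0 : (0:ℝ) < b := by linarith
  have hc0 : (0:ℝ) < c := by linarith
  have hcb : c ≤ b := by rw [hbdef, hcdef]; linarith
  have hb_c : b = c + 1 := by rw [hbdef, hcdef]; ring
  clear_value b c
  have hC : 0 ≤ C := by
    have h0 := le_trans (abs_nonneg _) (hA r₀ le_rfl)
    by_contra hneg
    exact absurd h0 (not_le.mpr (div_neg_of_neg_of_pos (not_le.mp hneg) hr₀))
  have ha0 : 0 ≤ |a| := abs_nonneg a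
  set K : ℝ := 4*a^2*b*c + 8*a^2*b + 4* |a| *b*c*C + (1+2* |a|+2*C)*C + 2* |a| *C with hKdef
  have hK : 0 ≤ K := by
    have h1 : 0 ≤ 4*a^2*b*c := mul_nonneg (mul_nonneg (by positivity) hb0.le) hc0.le
    have h2 : 0 ≤ 8*a^2*b := mul_nonneg (by positivity) hb0.le
    have h3' : 0 ≤ 4* |a| *b*c*C := by
      have := mul_nonneg (mul_nonneg (mul_nonneg (by linarith : (0:ℝ) ≤ 4* |a|) hb0.le) hc0.le) hC
      linarith [this]
    have h4 : 0 ≤ (1+2* |a|+2*C)*C := mul_nonneg (by linarith) hC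
    have h5 : 0 ≤ 2* |a| *C := mul_nonneg (by linarith) hC
    rw [hKdef]; linarith
  clear_value K
  set r₁ : ℝ := max (max r₀ 1) (4* |a| *b + C + 1) with hr₁def
  have hr₁pos : 0 < r₁ := lt_of_lt_of_le one_pos ((le_max_right r₀ 1).trans (le_max_left _ _))
  -- the main pointwise bound
  have hmain : ∀ r ≥ r₁, |A r * (1 - (c / b) * h r / p r) - 2 * a| ≤ K / r := by
    intro r hr
    have hrr₀ : r₀ ≤ r := le_trans ((le_max_left r₀ 1).trans (le_max_left _ _)) hr
    have hr1 : (1:ℝ) ≤ r := le_trans ((le_max_right r₀ 1).trans (le_max_left _ _)) hr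
    have hrR : 4* |a| *b + C + 1 ≤ r := le_trans (le_max_right _ _) hr
    have hr0 : (0:ℝ) < r := lt_of_lt_of_le one_pos hr1
    have hA' := hA r hrr₀
    have hh' := hh r hrr₀
    have hp' := hp r hrr₀
    set s : ℝ := r ^ c with hsdef
    have hs_r : r ≤ s := by
      rw [hsdef]
      calc r = r ^ (1:ℝ) := (rpow_one r).symm
        _ ≤ r ^ c := rpow_le_rpow_of_exponent_le hr1 hc1
    have hs0 : (0:ℝ) < s := lt_of_lt_of_le hr0 hs_r
    have hs1 : (1:ℝ) ≤ s := le_trans hr1 hs_r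
    have hrn : r ^ (n:ℝ) = s * r ^ 2 := by
      rw [hsdef, ← rpow_two, ← rpow_add hr0, hcdef]; norm_num
    have hrn1 : r ^ ((n:ℝ) + 1) = s * r ^ 3 := by
      rw [hsdef, show (r:ℝ)^3 = r ^ (3:ℝ) by rw [← rpow_natCast r 3]; norm_num,
        ← rpow_add hr0, hcdef]; ring_nf
    rw [hrn] at hh' hp'
    rw [hrn1] at hh' hp'
    clear_value s
    clear hA hh hp hsdef hrn hrn1 hcdef hbdef h3 hn ha hr hr₁def
    -- error terms, rescaled so they are bounded by constants
    set fA : ℝ := (A r - 1/2 * s - a) * r with hfAdef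
    set fH : ℝ := (h r - (b^2 / r^2 - 4*a*b^3 / (c * (s * r^2)))) * (s * r^3) with hfHdef
    set fP : ℝ := (p r - (b*c / r^2 - 4*a*b / (s * r^2))) * (s * r^3) with hfPdef
    have hfA : |fA| ≤ C := by
      rw [hfAdef, abs_mul, abs_of_pos hr0]
      calc |A r - 1/2 * s - a| * r ≤ (C/r) * r :=
            mul_le_mul_of_nonneg_right hA' hr0.le
        _ = C := by field_simp
    have hfH : |fH| ≤ C := by
      rw [hfHdef, abs_mul, abs_of_pos (by positivity : (0:ℝ) < s * r^3)]
      calc |_| * (s*r^3) ≤ (C/(s*r^3)) * (s*r^3) := by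
            apply mul_le_mul_of_nonneg_right hh' (by positivity)
        _ = C := by field_simp
    have hfP : |fP| ≤ C := by
      rw [hfPdef, abs_mul, abs_of_pos (by positivity : (0:ℝ) < s * r^3)]
      calc |_| * (s*r^3) ≤ (C/(s*r^3)) * (s*r^3) := by
            apply mul_le_mul_of_nonneg_right hp' (by positivity)
        _ = C := by field_simp
    have hAbound : |A r| ≤ 1/2 * s + |a| + C := by
      have h1 : |A r| ≤ |A r - 1/2 * s - a| + |1/2 * s + a| := by
        calc |A r| = |(A r - 1/2 * s - a) + (1/2 * s + a)| := by ring_nf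
          _ ≤ _ := abs_add_le _ _
      have h2 : |1/2 * s + a| ≤ 1/2 * s + |a| := by
        calc |1/2 * s + a| ≤ |1/2 * s| + |a| := abs_add_le _ _
          _ = 1/2 * s + |a| := by rw [abs_of_pos (by positivity)]
      have h3' : C / r ≤ C := div_le_self hC hr1
      linarith [hA']
    -- p is bounded below
    have hplow : 1 / r^2 ≤ p r := by
      have h1 : b*c / r^2 - 4*a*b / (s * r^2) - C/(s*r^3) ≤ p r := by
        have := (abs_le.mp hp').1; linarith
      have h2 : 1/r^2 ≤ b*c / r^2 - 4*a*b / (s * r^2) - C/(s*r^3) := by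
        rw [← sub_nonneg]
        have heq : b*c / r^2 - 4*a*b / (s * r^2) - C/(s*r^3) - 1/r^2
            = (s*r*(b*c-1) - 4*a*b*r - C) / (s*r^3) := by
          field_simp; ring
        rw [heq]
        apply div_nonneg _ (by positivity)
        have hbc1 : (2:ℝ) ≤ b * c := by
          have := mul_le_mul hb2 hc1 zero_le_one (by linarith : (0:ℝ) ≤ b)
          linarith
        have k1 : s*r ≤ s*r*(b*c-1) := le_mul_of_one_le_right (by positivity) (by linarith)
        have k2 : (4* |a| *b + C + 1)*r ≤ s*r :=
          mul_le_mul_of_nonneg_right (le_trans hrR hs_r) hr0.le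
        have k2' : (4* |a| *b + C + 1)*r = 4* |a| *b*r + C*r + r := by ring
        have k3 : 4*a*b*r ≤ 4* |a| *b*r :=
          mul_le_mul_of_nonneg_right (mul_le_mul_of_nonneg_right
            (by linarith [le_abs_self a] : 4*a ≤ 4* |a|) hb0.le) hr0.le
        have k4 : C ≤ C*r := le_mul_of_one_le_right hC hr1
        linarith
      linarith
    have hppos : 0 < p r := lt_of_lt_of_le (by positivity) hplow
    -- the key algebraic identity
    set Nm : ℝ := A r * (p r - (c/b) * h r) - 2*a*(p r) with hNmdef
    have hident : Nm * (b*s*r^3) =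
        4*a^2*b^2*c*r + 8*a^2*b^2*r + 4*a*b^2*c*fA + A r * (b*fP - c*fH) - 2*a*b*fP := by
      rw [hNmdef, hfAdef, hfHdef, hfPdef, hb_c]
      field_simp
      ring
    clear_value fA fH fP Nm
    clear hA' hh' hp' hfAdef hfHdef hfPdef hb_c
    -- bound the five terms
    have hcoe1 : (0:ℝ) ≤ 4*a^2*b^2*c := mul_nonneg (mul_nonneg (by positivity) (by positivity)) hc0.le
    have hcoe2 : (0:ℝ) ≤ 8*a^2*b^2 := mul_nonneg (by positivity) (by positivity)
    have ht1 : |4*a^2*b^2*c*r| ≤ 4*a^2*b^2*c*s := by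
      rw [abs_of_nonneg (mul_nonneg hcoe1 hr0.le)]
      exact mul_le_mul_of_nonneg_left hs_r hcoe1
    have ht2 : |8*a^2*b^2*r| ≤ 8*a^2*b^2*s := by
      rw [abs_of_nonneg (mul_nonneg hcoe2 hr0.le)]
      exact mul_le_mul_of_nonneg_left hs_r hcoe2
    have ht3 : |4*a*b^2*c*fA| ≤ 4* |a| *b^2*c*C := by
      rw [abs_mul]
      have he : |4*a*b^2*c| = 4* |a| *b^2*c := by
        rw [abs_mul, abs_mul, abs_mul, abs_of_nonneg (by norm_num : (0:ℝ) ≤ 4),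
          abs_of_nonneg (by positivity : (0:ℝ) ≤ b^2), abs_of_pos hc0]
      rw [he]
      apply mul_le_mul_of_nonneg_left hfA
      have := mul_nonneg (mul_nonneg (by linarith : (0:ℝ) ≤ 4* |a|) (by positivity : (0:ℝ) ≤ b^2)) hc0.le
      linarith [this]
    have ht4 : |A r * (b*fP - c*fH)| ≤ (1/2 * s + |a| + C) * (b*C + c*C) := by
      rw [abs_mul]
      apply mul_le_mul hAbound _ (abs_nonneg _) (by positivity)
      calc |b*fP - c*fH| ≤ |b*fP| + |c*fH| := abs_sub _ _
        _ = b* |fP| + c* |fH| := by rw [abs_mul, abs_mul, abs_of_pos hb0, abs_of_pos hc0]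
        _ ≤ b*C + c*C := by
            have := mul_le_mul_of_nonneg_left hfP hb0.le
            have := mul_le_mul_of_nonneg_left hfH hc0.le
            linarith
    have ht5 : |2*a*b*fP| ≤ 2* |a| *b*C := by
      rw [abs_mul]
      have he : |2*a*b| = 2* |a| *b := by
        rw [abs_mul, abs_mul, abs_of_nonneg (by norm_num : (0:ℝ) ≤ 2), abs_of_pos hb0]
      rw [he]
      apply mul_le_mul_of_nonneg_left hfP
      have := mul_nonneg (by linarith : (0:ℝ) ≤ 2* |a|) hb0.le
      linarith [this]
    -- combine
    have hQ : |Nm * (b*s*r^3)| ≤ K * b * s := by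
      rw [hident]
      calc |4*a^2*b^2*c*r + 8*a^2*b^2*r + 4*a*b^2*c*fA + A r * (b*fP - c*fH) - 2*a*b*fP|
          ≤ |4*a^2*b^2*c*r + 8*a^2*b^2*r + 4*a*b^2*c*fA + A r * (b*fP - c*fH)| + |2*a*b*fP| :=
            abs_sub _ _
        _ ≤ |4*a^2*b^2*c*r + 8*a^2*b^2*r + 4*a*b^2*c*fA| + |A r * (b*fP - c*fH)| + |2*a*b*fP| := by
            linarith [abs_add_le (4*a^2*b^2*c*r + 8*a^2*b^2*r + 4*a*b^2*c*fA) (A r * (b*fP - c*fH))]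
        _ ≤ |4*a^2*b^2*c*r + 8*a^2*b^2*r| + |4*a*b^2*c*fA| + |A r * (b*fP - c*fH)| + |2*a*b*fP| := by
            linarith [abs_add_le (4*a^2*b^2*c*r + 8*a^2*b^2*r) (4*a*b^2*c*fA)]
        _ ≤ |4*a^2*b^2*c*r| + |8*a^2*b^2*r| + |4*a*b^2*c*fA| + |A r * (b*fP - c*fH)| + |2*a*b*fP| := by
            linarith [abs_add_le (4*a^2*b^2*c*r) (8*a^2*b^2*r)]
        _ ≤ 4*a^2*b^2*c*s + 8*a^2*b^2*s + 4* |a| *b^2*c*C + (1/2 * s + |a| + C) * (b*C + c*C)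
              + 2* |a| *b*C := by linarith
        _ ≤ K * b * s := by
            have P1 : 0 ≤ |a| *b^2*c*C*(s-1) :=
              mul_nonneg (mul_nonneg (mul_nonneg (mul_nonneg ha0 (by positivity)) hc0.le) hC)
                (by linarith)
            have P2 : 0 ≤ |a| *b*C*(s-1) :=
              mul_nonneg (mul_nonneg (mul_nonneg ha0 hb0.le) hC) (by linarith)
            have P3 : 0 ≤ C^2*b*(s-1) :=
              mul_nonneg (mul_nonneg (by positivity) hb0.le) (by linarith)
            have P4 : 0 ≤ C*s*(b-c) := mul_nonneg (mul_nonneg hC hs0.le) (by linarith)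
            have P5 : 0 ≤ (|a|+C)*C*(b-c) :=
              mul_nonneg (mul_nonneg (add_nonneg ha0 hC) hC) (by linarith)
            rw [hKdef]
            linarith [P1, P2, P3, P4, P5]
    have hNm : |Nm| ≤ K / r^3 := by
      rw [abs_mul, abs_of_pos (by positivity : (0:ℝ) < b*s*r^3)] at hQ
      rw [← le_div_iff₀ (by positivity : (0:ℝ) < b*s*r^3)] at hQ
      calc |Nm| ≤ K * b * s / (b*s*r^3) := hQ
        _ = K / r^3 := by field_simp
    -- conclude
    have hform : A r * (1 - (c / b) * h r / p r) - 2 * a = Nm / p r := by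
      rw [hNmdef]
      field_simp
    rw [hform, abs_div, abs_of_pos hppos]
    rw [div_le_div_iff₀ hppos hr0]
    have h1 : |Nm| * r ≤ (K/r^3) * r := mul_le_mul_of_nonneg_right hNm hr0.le
    have h2 : (K/r^3) * r = K / r^2 := by field_simp
    have h4 : K / r^2 = K * (1/r^2) := by ring
    have h5 : K * (1/r^2) ≤ K * p r := mul_le_mul_of_nonneg_left hplow hK
    linarith
  refine ⟨⟨K, r₁, hr₁pos, hmain⟩, ?_⟩
  have ht : Tendsto (fun r : ℝ => K / r) atTop (𝓝 0) :=
    tendsto_const_nhds.div_atTop tendsto_id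
  have hz : Tendsto (fun r => A r * (1 - (c / b) * h r / p r) - 2 * a) atTop (𝓝 0) := by
    apply squeeze_zero_norm' _ ht
    filter_upwards [eventually_ge_atTop r₁] with r hr
    simpa using hmain r hr
  have := hz.add_const (2*a)
  simpa using this
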